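/- Let $(X_t)$ be a Markov chain on finite state space $V$, $W\subseteq V$ with $|W|=m$, $X_0\notin W$, $\lambda = 1-\max\{p(u,w):u\in V, u\ne w\in W\}>0$, $L\ge 1$, and define $\xi_s = \sum_{w\in W}\mathbf{1}\{T_w > s\wedge r_w\}/H_w(s\wedge r_w - 1)$ as in the martingale construction (with $H_w(t)=\prod_{i=0}^t(1-p(X_i,w))$ and $r_w = \min\{t:H_w(t)<\lambda/L\}$). Then for any $\vartheta > 0$ and any $s$, $\Pr(|\xi_s - m| > \vartheta m) \le 2\exp\left[-\vartheta^2\lambda^4 m/(8L)^2\right]$. -/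

import Mathlib

/-!
Fix `w ∈ W`. While `w` is alive (unvisited, with `H_w` still at least `λ/L`), the `w`-term of `ξ`
moves from `1/H_w(t-1)` to `1{X_{t+1} ≠ w}/H_w(t)`, i.e. by `(p(X_t,w) - 1{X_{t+1} = w}) b_w` with
`0 ≤ b_w = 1/H_w(t) ≤ L/λ²`; afterwards it is frozen. Hence `ξ_{t+1} - ξ_t = A_t - B_t(X_{t+1})`
where `B_t ∈ [0, L/λ²]` has conditional mean `A_t`, so that
`E[exp θ(A_t - B_t) | X_t] ≤ exp(θ² (L/λ²) A_t)` for `|θ| L/λ² ≤ 1`. The drifts `A_t` are paid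
from the budget `R_t = ∑_w 1{w alive} (L/λ - 1/H_w(t-1))`, which stays nonnegative, drops by at
least `A_t` at each step and starts below `mL/λ`. Therefore
`exp(θ(ξ_t - m) + θ² (L/λ²) R_t)` is a supermartingale, `E exp(±θ(ξ_s - m)) ≤ exp(θ² m L²/λ³)`, and
Chernoff's bound with `θ = ϑλ³/(2L²)` gives the claim. For `ϑ > L/λ` the event is empty, since
`0 ≤ ξ_s ≤ mL/λ`.
-/

open Finset

/-- `HmP p ω w t = ∏_{i<t} (1 - p(ω_i,w))`, i.e. `H_w(t-1)` with `H_w(-1)=1`. -/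
noncomputable def HmP {V : Type*} (p : V → V → ℝ) (ω : ℕ → V) (w : V) (t : ℕ) : ℝ :=
  ∏ i ∈ Finset.range t, (1 - p (ω i) w)

/-- `minSR p lam L ω w s = min s r_w`, where `r_w = min{t : H_w(t) < lam/L}`. -/
noncomputable def minSR {V : Type*} (p : V → V → ℝ) (lam L : ℝ)
    (ω : ℕ → V) (w : V) (s : ℕ) : ℕ :=
  sInf ({t : ℕ | HmP p ω w (t + 1) < lam / L} ∪ {s})

open scoped Classical in
/-- `ξ_s = ∑_{w∈W} 1{T_w > s ∧ r_w}/H_w(s ∧ r_w - 1)` along the trajectory `ω`. -/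
noncomputable def xiSum {V : Type*} (p : V → V → ℝ) (W : Finset V) (lam L : ℝ)
    (ω : ℕ → V) (s : ℕ) : ℝ :=
  ∑ w ∈ W, (if ∀ t ≤ minSR p lam L ω w s, ω t ≠ w then (1 : ℝ) else 0) /
      HmP p ω w (minSR p lam L ω w s)

namespace Nat

variable {P Q : ℕ → Prop} {s n : ℕ}

theorem sInf_setOf_union_singleton_le : sInf ({t | P t} ∪ {s}) ≤ s :=
  Nat.sInf_le (Or.inr rfl)

theorem sInf_setOf_union_singleton_eq (hns : n ≤ s) (hn : P n ∨ n = s)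
    (hlt : ∀ i < n, ¬P i) : sInf ({t | P t} ∪ {s}) = n := by
  refine le_antisymm (Nat.sInf_le hn) (le_csInf ⟨s, Or.inr rfl⟩ fun b hb => ?_)
  by_contra! hbn
  rcases hb with hb | rfl
  · exact hlt b hbn hb
  · omega

theorem sInf_setOf_union_singleton_congr (h : ∀ i < s, P i ↔ Q i) :
    sInf ({t | P t} ∪ {s}) = sInf ({t | Q t} ∪ {s}) := by
  have hle : sInf ({t | P t} ∪ {s}) ≤ s := sInf_setOf_union_singleton_le
  refine (sInf_setOf_union_singleton_eq hle ?_ fun i hi hQ => ?_).symm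
  · rcases Nat.sInf_mem (⟨s, Or.inr rfl⟩ : ({t | P t} ∪ {s}).Nonempty) with hP | hs
    · rcases hle.lt_or_eq with hlt | heq
      · exact Or.inl ((h _ hlt).1 hP)
      · exact Or.inr heq
    · exact Or.inr hs
  · exact Nat.notMem_of_lt_sInf hi (Or.inl ((h i (hi.trans_le hle)).2 hQ))

theorem sInf_setOf_union_singleton_succ (h : ∃ i ≤ s, P i) :
    sInf ({t | P t} ∪ {s + 1}) = sInf ({t | P t} ∪ {s}) := by
  obtain ⟨i, his, hi⟩ := h
  set n := sInf ({t | P t} ∪ {s})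
  have hlt : ∀ j < n, ¬P j := fun j hj hP => Nat.notMem_of_lt_sInf hj (Or.inl hP)
  have hn : P n := by
    rcases Nat.sInf_mem (⟨s, Or.inr rfl⟩ : ({t | P t} ∪ {s}).Nonempty) with hn | hn
    · exact hn
    · have hns : n = s := hn
      obtain rfl : i = n := by
        by_contra hne
        exact hlt i (by omega) hi
      exact hi
  exact sInf_setOf_union_singleton_eq (sInf_setOf_union_singleton_le.trans s.le_succ)
    (Or.inl hn) hlt

end Nat

theorem Real.exp_le_one_add_add_sq {z : ℝ} (hz : |z| ≤ 1) : Real.exp z ≤ 1 + z + z ^ 2 := by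
  linarith [(abs_le.1 (Real.abs_exp_sub_one_sub_id_le hz)).2]

theorem Real.sum_mul_exp_mul_sub_le {ι : Type*} [Fintype ι] {q B : ι → ℝ} {c θ : ℝ}
    (hq0 : ∀ i, 0 ≤ q i) (hq1 : ∑ i, q i = 1) (hB0 : ∀ i, 0 ≤ B i) (hBc : ∀ i, B i ≤ c)
    (hθ : |θ| * c ≤ 1) :
    ∑ i, q i * Real.exp (θ * (∑ j, q j * B j - B i)) ≤ Real.exp (θ ^ 2 * c * ∑ j, q j * B j) := by
  set A := ∑ j, q j * B j
  have hA0 : 0 ≤ A := sum_nonneg fun j _ => mul_nonneg (hq0 j) (hB0 j)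
  have hAc : A ≤ c := by
    calc A ≤ ∑ j, q j * c := sum_le_sum fun j _ => mul_le_mul_of_nonneg_left (hBc j) (hq0 j)
      _ = c := by rw [← sum_mul, hq1, one_mul]
  have hsmall : ∀ i, |θ * (A - B i)| ≤ 1 := fun i => by
    rw [abs_mul]
    refine le_trans (mul_le_mul_of_nonneg_left ?_ (abs_nonneg θ)) hθ
    rw [abs_le]
    constructor <;> linarith [hB0 i, hBc i]
  have hvar : ∑ i, q i * (A - B i) ^ 2 ≤ c * A := by
    have hexpand : ∀ i,
        q i * (A - B i) ^ 2 = A ^ 2 * q i - 2 * A * (q i * B i) + q i * B i * B i :=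
      fun i => by ring
    have hsq : ∑ i, q i * B i * B i ≤ A * c := by
      rw [sum_mul]
      exact sum_le_sum fun i _ => mul_le_mul_of_nonneg_left (hBc i) (mul_nonneg (hq0 i) (hB0 i))
    rw [sum_congr rfl fun i _ => hexpand i, sum_add_distrib, sum_sub_distrib, ← mul_sum, ← mul_sum,
      hq1]
    nlinarith [sq_nonneg A]
  calc ∑ i, q i * Real.exp (θ * (A - B i))
      ≤ ∑ i, q i * (1 + θ * (A - B i) + (θ * (A - B i)) ^ 2) :=
        sum_le_sum fun i _ =>
          mul_le_mul_of_nonneg_left (Real.exp_le_one_add_add_sq (hsmall i)) (hq0 i)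
    _ = 1 + θ ^ 2 * ∑ i, q i * (A - B i) ^ 2 := by
        have hexpand : ∀ i, q i * (1 + θ * (A - B i) + (θ * (A - B i)) ^ 2) =
            q i + θ * A * q i - θ * (q i * B i) + θ ^ 2 * (q i * (A - B i) ^ 2) := fun i => by ring
        rw [sum_congr rfl fun i _ => hexpand i, sum_add_distrib, sum_sub_distrib, sum_add_distrib,
          ← mul_sum, ← mul_sum, ← mul_sum, hq1]
        ring
    _ ≤ 1 + θ ^ 2 * c * A := by nlinarith [sq_nonneg θ]
    _ ≤ Real.exp (θ ^ 2 * c * A) := by linarith [Real.add_one_le_exp (θ ^ 2 * c * A)]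

theorem Real.one_le_exp_add_exp_of_lt_abs {y ε θ : ℝ} (hθ : 0 ≤ θ) (h : ε < |y|) :
    1 ≤ Real.exp (θ * (y - ε)) + Real.exp (θ * (-y - ε)) := by
  rcases lt_abs.1 h with h | h
  · linarith [Real.one_le_exp (mul_nonneg hθ (sub_nonneg.2 h.le)), Real.exp_nonneg (θ * (-y - ε))]
  · linarith [Real.one_le_exp (mul_nonneg hθ (sub_nonneg.2 h.le)), Real.exp_nonneg (θ * (y - ε))]

theorem Finset.sum_ite_lt_abs_sub_le {ι : Type*} (s : Finset ι) {μ f : ι → ℝ}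
    (hμ : ∀ i ∈ s, 0 ≤ μ i) (a ε : ℝ) {θ : ℝ} (hθ : 0 ≤ θ) :
    ∑ i ∈ s, (if ε < |f i - a| then μ i else 0) ≤
      Real.exp (-(θ * ε)) * (∑ i ∈ s, μ i * Real.exp (θ * (f i - a)) +
        ∑ i ∈ s, μ i * Real.exp (-θ * (f i - a))) := by
  rw [← sum_add_distrib, mul_sum]
  refine sum_le_sum fun i hi => ?_
  have hexp : Real.exp (-(θ * ε)) * (μ i * Real.exp (θ * (f i - a)) +
      μ i * Real.exp (-θ * (f i - a))) =
      μ i * (Real.exp (θ * (f i - a - ε)) + Real.exp (θ * (-(f i - a) - ε))) := by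
    have h₁ : θ * (f i - a - ε) = -(θ * ε) + θ * (f i - a) := by ring
    have h₂ : θ * (-(f i - a) - ε) = -(θ * ε) + -θ * (f i - a) := by ring
    rw [h₁, h₂, Real.exp_add, Real.exp_add]
    ring
  rw [hexp]
  split_ifs with h
  · exact le_mul_of_one_le_right (hμ i hi) (Real.one_le_exp_add_exp_of_lt_abs hθ h)
  · exact mul_nonneg (hμ i hi) (by positivity)

section Paths

variable {V : Type*}

def extendPath {s : ℕ} (x : Fin (s + 1) → V) : ℕ → V := fun t => x ⟨min t s, by omega⟩

open scoped Classical in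
noncomputable def pathProb (p : V → V → ℝ) (v₀ : V) {s : ℕ} (x : Fin (s + 1) → V) : ℝ :=
  if x 0 = v₀ then ∏ i : Fin s, p (x i.castSucc) (x i.succ) else 0

theorem extendPath_self {s : ℕ} (x : Fin (s + 1) → V) : extendPath x s = x (Fin.last s) := by
  simp [extendPath, Fin.last]

theorem extendPath_snoc {s : ℕ} (x : Fin (s + 1) → V) (v : V) {i : ℕ} (hi : i ≤ s + 1) :
    extendPath (Fin.snoc x v : Fin (s + 1 + 1) → V) i =
      Function.update (extendPath x) (s + 1) v i := by
  rcases hi.lt_or_eq with hi | rfl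
  · have hcast : (⟨min i (s + 1), by omega⟩ : Fin (s + 1 + 1)) = Fin.castSucc ⟨i, hi⟩ :=
      Fin.ext (min_eq_left hi.le)
    simp only [extendPath, hcast, Fin.snoc_castSucc, Function.update_of_ne hi.ne]
    exact congrArg x (Fin.ext (min_eq_left (Nat.lt_succ_iff.1 hi)).symm)
  · simp only [extendPath, Function.update_self, min_self]
    exact Fin.snoc_last (α := fun _ => V) v x

variable {p : V → V → ℝ}

theorem pathProb_nonneg (hp0 : ∀ u v, 0 ≤ p u v) (v₀ : V) {s : ℕ} (x : Fin (s + 1) → V) :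
    0 ≤ pathProb p v₀ x := by
  unfold pathProb
  split_ifs
  · exact prod_nonneg fun i _ => hp0 _ _
  · rfl

theorem pathProb_snoc (v₀ : V) {s : ℕ} (x : Fin (s + 1) → V) (v : V) :
    pathProb p v₀ (Fin.snoc x v : Fin (s + 1 + 1) → V) =
      pathProb p v₀ x * p (extendPath x s) v := by
  have h0 : (Fin.snoc x v : Fin (s + 1 + 1) → V) 0 = x 0 :=
    Fin.snoc_castSucc (α := fun _ => V) v x 0
  have hsucc (i : Fin s) : (Fin.snoc x v : Fin (s + 1 + 1) → V) i.castSucc.succ = x i.succ := by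
    rw [Fin.succ_castSucc, Fin.snoc_castSucc]
  rw [pathProb, pathProb, h0]
  simp only [Fin.prod_univ_castSucc, Fin.snoc_castSucc, Fin.succ_last, Fin.snoc_last, hsucc,
    extendPath_self, ite_mul, zero_mul]

theorem sum_pathProb_mul_le_of_supermartingale [Fintype V] (hp0 : ∀ u v, 0 ≤ p u v)
    (Z : ℕ → (ℕ → V) → ℝ) (hZ : ∀ t, DependsOn (Z t) (Set.Iic t))
    (hstep : ∀ t ω, ∑ v, p (ω t) v * Z (t + 1) (Function.update ω (t + 1) v) ≤ Z t ω)
    (v₀ : V) (s : ℕ) :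
    ∑ x : Fin (s + 1) → V, pathProb p v₀ x * Z s (extendPath x) ≤ Z 0 fun _ => v₀ := by
  induction s with
  | zero =>
    refine (Fintype.sum_eq_single (fun _ => v₀) fun x hx => ?_).trans_le ?_
    · have : x 0 ≠ v₀ := fun h => hx (funext fun i => by rw [Fin.fin_one_eq_zero i, h])
      simp [pathProb, this]
    · have hprob : pathProb p v₀ (fun _ : Fin (0 + 1) => v₀) = 1 := by simp [pathProb]
      rw [hprob, one_mul]
      exact le_rfl
  | succ s ih =>
    calc ∑ y : Fin (s + 1 + 1) → V, pathProb p v₀ y * Z (s + 1) (extendPath y)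
        = ∑ x : Fin (s + 1) → V, pathProb p v₀ x *
            ∑ v, p (extendPath x s) v * Z (s + 1) (Function.update (extendPath x) (s + 1) v) := by
          rw [← (Fin.snocEquiv fun _ => V).sum_comp, Fintype.sum_prod_type, sum_comm]
          refine sum_congr rfl fun x _ => ?_
          rw [mul_sum]
          refine sum_congr rfl fun v _ => ?_
          show pathProb p v₀ (Fin.snoc x v : Fin (s + 1 + 1) → V) *
            Z (s + 1) (extendPath (Fin.snoc x v : Fin (s + 1 + 1) → V)) = _
          simp only [pathProb_snoc, hZ (s + 1) fun i hi => extendPath_snoc x v hi, mul_assoc]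
      _ ≤ ∑ x : Fin (s + 1) → V, pathProb p v₀ x * Z s (extendPath x) :=
          sum_le_sum fun x _ => mul_le_mul_of_nonneg_left (hstep s _) (pathProb_nonneg hp0 v₀ x)
      _ ≤ Z 0 fun _ => v₀ := ih

end Paths

open scoped Classical

section Xi

variable {V : Type*} {p : V → V → ℝ} {lam L : ℝ} {ω : ℕ → V} {w : V}

theorem HmP_zero : HmP p ω w 0 = 1 := prod_range_zero _

theorem HmP_succ (t : ℕ) : HmP p ω w (t + 1) = HmP p ω w t * (1 - p (ω t) w) :=
  prod_range_succ _ _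

theorem HmP_congr {ω' : ℕ → V} {t : ℕ} (h : ∀ i < t, ω i = ω' i) :
    HmP p ω w t = HmP p ω' w t :=
  prod_congr rfl fun i hi => by rw [h i (mem_range.1 hi)]

theorem minSR_le (s : ℕ) : minSR p lam L ω w s ≤ s := Nat.sInf_setOf_union_singleton_le

theorem minSR_eq_self {s : ℕ} (h : ∀ i < s, lam / L ≤ HmP p ω w (i + 1)) :
    minSR p lam L ω w s = s :=
  Nat.sInf_setOf_union_singleton_eq le_rfl (Or.inr rfl) fun i hi => not_lt.2 (h i hi)

theorem minSR_succ {s : ℕ} (h : ∃ i ≤ s, HmP p ω w (i + 1) < lam / L) :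
    minSR p lam L ω w (s + 1) = minSR p lam L ω w s :=
  Nat.sInf_setOf_union_singleton_succ h

theorem minSR_congr {ω' : ℕ → V} {s : ℕ} (h : ∀ i < s, ω i = ω' i) :
    minSR p lam L ω w s = minSR p lam L ω' w s :=
  Nat.sInf_setOf_union_singleton_congr fun i hi => by
    rw [HmP_congr fun j hj => h j (lt_of_lt_of_le hj hi)]

theorem div_le_HmP_minSR (hlamL : lam ≤ L) (hL : 0 ≤ L) (s : ℕ) :
    lam / L ≤ HmP p ω w (minSR p lam L ω w s) := by
  rcases h : minSR p lam L ω w s with _ | k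
  · rw [HmP_zero]
    exact div_le_one_of_le₀ hlamL hL
  · exact not_lt.1 fun hk => Nat.notMem_of_lt_sInf (by omega : k < minSR p lam L ω w s) (Or.inl hk)

/-- The paper's event `{T_w > t, r_w > t}`. -/
def IsAlive (p : V → V → ℝ) (lam L : ℝ) (ω : ℕ → V) (w : V) (t : ℕ) : Prop :=
  ∀ i ≤ t, lam / L ≤ HmP p ω w (i + 1) ∧ ω i ≠ w

namespace IsAlive

variable {t : ℕ}

theorem of_succ (h : IsAlive p lam L ω w (t + 1)) : IsAlive p lam L ω w t :=
  fun i hi => h i (by omega)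

theorem minSR_eq (h : IsAlive p lam L ω w t) : minSR p lam L ω w t = t :=
  minSR_eq_self fun i hi => (h i hi.le).1

theorem minSR_succ_eq (h : IsAlive p lam L ω w t) : minSR p lam L ω w (t + 1) = t + 1 :=
  minSR_eq_self fun i hi => (h i (by omega)).1

theorem div_le_HmP (hlamL : lam ≤ L) (hL : 0 ≤ L) (h : IsAlive p lam L ω w t) :
    lam / L ≤ HmP p ω w t :=
  h.minSR_eq ▸ div_le_HmP_minSR hlamL hL t

theorem div_le_HmP_succ (h : IsAlive p lam L ω w t) : lam / L ≤ HmP p ω w (t + 1) :=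
  (h t le_rfl).1

theorem HmP_succ_pos (hlam : 0 < lam) (hlamL : lam ≤ L) (h : IsAlive p lam L ω w t) :
    0 < HmP p ω w (t + 1) :=
  (div_pos hlam (hlam.trans_le hlamL)).trans_le h.div_le_HmP_succ

end IsAlive

theorem isAlive_congr {ω' : ℕ → V} {t : ℕ} (h : ∀ i ≤ t, ω i = ω' i) :
    IsAlive p lam L ω w t ↔ IsAlive p lam L ω' w t :=
  forall_congr' fun i => imp_congr_right fun hi => by
    rw [HmP_congr fun j hj => h j (by omega), h i hi]

noncomputable def xiTerm (p : V → V → ℝ) (lam L : ℝ) (ω : ℕ → V) (w : V) (s : ℕ) : ℝ :=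
  (if ∀ t ≤ minSR p lam L ω w s, ω t ≠ w then (1 : ℝ) else 0) / HmP p ω w (minSR p lam L ω w s)

theorem xiSum_eq_sum_xiTerm (W : Finset V) (s : ℕ) :
    xiSum p W lam L ω s = ∑ w ∈ W, xiTerm p lam L ω w s := rfl

/-- While `w` is alive at time `t`, the `w`-term of `ξ_{t+1}` is `jump` if `X_{t+1} ≠ w` and `0`
otherwise. -/
noncomputable def jump (p : V → V → ℝ) (lam L : ℝ) (ω : ℕ → V) (w : V) (t : ℕ) : ℝ :=
  if IsAlive p lam L ω w t then (HmP p ω w (t + 1))⁻¹ else 0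

/-- `1/H_w ≤ L/λ` while `w` is alive, so this is the drift the `w`-term can still collect. -/
noncomputable def budget (p : V → V → ℝ) (lam L : ℝ) (ω : ℕ → V) (w : V) (t : ℕ) : ℝ :=
  if IsAlive p lam L ω w t then L / lam - (HmP p ω w t)⁻¹ else 0

theorem HmP_minSR_pos (hlam : 0 < lam) (hlamL : lam ≤ L) (s : ℕ) :
    0 < HmP p ω w (minSR p lam L ω w s) :=
  (div_pos hlam (hlam.trans_le hlamL)).trans_le (div_le_HmP_minSR hlamL (hlam.le.trans hlamL) s)

theorem xiTerm_nonneg (hlam : 0 < lam) (hlamL : lam ≤ L) (s : ℕ) : 0 ≤ xiTerm p lam L ω w s :=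
  div_nonneg (by split_ifs <;> norm_num) (HmP_minSR_pos hlam hlamL s).le

theorem xiTerm_le (hlam : 0 < lam) (hlamL : lam ≤ L) (s : ℕ) : xiTerm p lam L ω w s ≤ L / lam :=
  calc xiTerm p lam L ω w s ≤ 1 / HmP p ω w (minSR p lam L ω w s) :=
        div_le_div_of_nonneg_right (by split_ifs <;> norm_num) (HmP_minSR_pos hlam hlamL s).le
    _ ≤ 1 / (lam / L) := one_div_le_one_div_of_le (div_pos hlam (hlam.trans_le hlamL))
        (div_le_HmP_minSR hlamL (hlam.le.trans hlamL) s)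
    _ = L / lam := one_div_div lam L

theorem xiTerm_zero (hw : ω 0 ≠ w) : xiTerm p lam L ω w 0 = 1 := by
  have h0 : minSR p lam L ω w 0 = 0 := Nat.le_zero.1 (minSR_le 0)
  simp [xiTerm, h0, HmP_zero, hw]

theorem xiTerm_congr {ω' : ℕ → V} {s : ℕ} (h : ∀ i ≤ s, ω i = ω' i) :
    xiTerm p lam L ω w s = xiTerm p lam L ω' w s := by
  have hρ : minSR p lam L ω w s = minSR p lam L ω' w s := minSR_congr fun i hi => h i hi.le
  have hρs : minSR p lam L ω w s ≤ s := minSR_le s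
  unfold xiTerm
  rw [← hρ, HmP_congr fun i hi => h i (by omega)]
  congr 1
  exact if_congr (forall₂_congr fun i hi => by rw [h i (by omega)]) rfl rfl

theorem xiTerm_succ (hlam : 0 < lam) (hlamL : lam ≤ L) (t : ℕ) :
    xiTerm p lam L ω w (t + 1) = xiTerm p lam L ω w t +
      (p (ω t) w - if ω (t + 1) = w then 1 else 0) * jump p lam L ω w t := by
  by_cases halive : IsAlive p lam L ω w t
  · have hH : 0 < HmP p ω w t * (1 - p (ω t) w) :=
      HmP_succ (p := p) t ▸ halive.HmP_succ_pos hlam hlamL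
    have hH₀ : HmP p ω w t ≠ 0 := left_ne_zero_of_mul hH.ne'
    have hH₁ : 1 - p (ω t) w ≠ 0 := right_ne_zero_of_mul hH.ne'
    have hunvisited : ∀ i ≤ t, ω i ≠ w := fun i hi => (halive i hi).2
    have hind : (∀ i ≤ t + 1, ω i ≠ w) ↔ ω (t + 1) ≠ w :=
      ⟨fun h => h _ le_rfl, fun h i hi =>
        (Nat.le_succ_iff.1 hi).elim (hunvisited i) fun e => e ▸ h⟩
    simp only [xiTerm, jump, halive.minSR_eq, halive.minSR_succ_eq, if_pos halive,
      if_pos hunvisited, hind, HmP_succ t, ne_eq, ite_not]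
    split_ifs <;> field_simp <;> ring
  · have hjump : jump p lam L ω w t = 0 := if_neg halive
    rw [hjump, mul_zero, add_zero]
    by_cases hstop : ∃ i ≤ t, HmP p ω w (i + 1) < lam / L
    · simp only [xiTerm, minSR_succ hstop]
    · simp only [not_exists, not_and, not_lt] at hstop
      obtain ⟨i, hit, hiw⟩ : ∃ i ≤ t, ω i = w := by
        by_contra! h
        exact halive fun i hi => ⟨hstop i hi, h i hi⟩
      have hvisited {n : ℕ} (hn : t ≤ n) : ¬∀ j ≤ n, ω j ≠ w := fun h => h i (hit.trans hn) hiw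
      simp only [xiTerm, minSR_eq_self fun j hj => hstop j (Nat.lt_succ_iff.1 hj),
        minSR_eq_self fun j hj => hstop j hj.le, if_neg (hvisited le_rfl),
        if_neg (hvisited t.le_succ), zero_div]

theorem jump_nonneg (hlam : 0 < lam) (hlamL : lam ≤ L) (t : ℕ) : 0 ≤ jump p lam L ω w t := by
  unfold jump
  split_ifs with h
  · exact inv_nonneg.2 (h.HmP_succ_pos hlam hlamL).le
  · rfl

theorem jump_le (hlam : 0 < lam) (hlamL : lam ≤ L) (hw : ∀ u, u ≠ w → p u w ≤ 1 - lam)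
    (t : ℕ) : jump p lam L ω w t ≤ L / lam ^ 2 := by
  have hL : 0 < L := hlam.trans_le hlamL
  unfold jump
  split_ifs with h
  · have hH : lam / L * lam ≤ HmP p ω w (t + 1) := by
      rw [HmP_succ]
      exact mul_le_mul (h.div_le_HmP hlamL hL.le) (by linarith [hw _ (h t le_rfl).2]) hlam.le
        ((div_pos hlam hL).le.trans (h.div_le_HmP hlamL hL.le))
    calc (HmP p ω w (t + 1))⁻¹ ≤ (lam / L * lam)⁻¹ := inv_anti₀ (by positivity) hH
      _ = L / lam ^ 2 := by field_simp
  · positivity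

theorem jump_congr {ω' : ℕ → V} {t : ℕ} (h : ∀ i ≤ t, ω i = ω' i) :
    jump p lam L ω w t = jump p lam L ω' w t := by
  simp only [jump, isAlive_congr h, HmP_congr fun i hi => h i (Nat.lt_succ_iff.1 hi)]

theorem budget_nonneg (hlam : 0 < lam) (hlamL : lam ≤ L) (t : ℕ) :
    0 ≤ budget p lam L ω w t := by
  unfold budget
  split_ifs with h
  · exact sub_nonneg.2 (inv_le_of_inv_le₀ (div_pos (hlam.trans_le hlamL) hlam)
      (by rw [inv_div]; exact h.div_le_HmP hlamL (hlam.le.trans hlamL)))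
  · rfl

theorem budget_le (hlam : 0 < lam) (hlamL : lam ≤ L) (t : ℕ) : budget p lam L ω w t ≤ L / lam := by
  unfold budget
  split_ifs with h
  · exact sub_le_self _ (inv_nonneg.2 ((div_pos hlam (hlam.trans_le hlamL)).le.trans
      (h.div_le_HmP hlamL (hlam.le.trans hlamL))))
  · exact div_nonneg (hlam.le.trans hlamL) hlam.le

theorem budget_succ_le (hlam : 0 < lam) (hlamL : lam ≤ L) (t : ℕ) :
    budget p lam L ω w (t + 1) ≤ budget p lam L ω w t - p (ω t) w * jump p lam L ω w t := by
  by_cases halive : IsAlive p lam L ω w t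
  · have hH : 0 < HmP p ω w t * (1 - p (ω t) w) :=
      HmP_succ (p := p) t ▸ halive.HmP_succ_pos hlam hlamL
    have hH₀ : HmP p ω w t ≠ 0 := left_ne_zero_of_mul hH.ne'
    have hH₁ : 1 - p (ω t) w ≠ 0 := right_ne_zero_of_mul hH.ne'
    have hpaid : budget p lam L ω w t - p (ω t) w * jump p lam L ω w t =
        L / lam - (HmP p ω w (t + 1))⁻¹ := by
      simp only [budget, jump, if_pos halive, HmP_succ t]
      field_simp
      ring
    rw [hpaid, budget]
    split_ifs
    · rfl
    · exact sub_nonneg.2 (inv_le_of_inv_le₀ (div_pos (hlam.trans_le hlamL) hlam)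
        (by rw [inv_div]; exact halive.div_le_HmP_succ))
  · have hdead : ¬IsAlive p lam L ω w (t + 1) := fun h => halive h.of_succ
    simp only [budget, jump, if_neg halive, if_neg hdead, mul_zero, sub_zero, le_refl]

theorem budget_congr {ω' : ℕ → V} {t : ℕ} (h : ∀ i ≤ t, ω i = ω' i) :
    budget p lam L ω w t = budget p lam L ω' w t := by
  simp only [budget, isAlive_congr h, HmP_congr fun i hi => h i hi.le]

end Xi

section Sum

variable {V : Type*} {p : V → V → ℝ} {lam L : ℝ} (W : Finset V) {ω : ℕ → V}

noncomputable def jumpOn (p : V → V → ℝ) (W : Finset V) (lam L : ℝ) (ω : ℕ → V) (t : ℕ)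
    (v : V) : ℝ :=
  if v ∈ W then jump p lam L ω v t else 0

theorem sum_mul_jumpOn [Fintype V] (q : V → ℝ) (t : ℕ) :
    ∑ v, q v * jumpOn p W lam L ω t v = ∑ w ∈ W, q w * jump p lam L ω w t := by
  simp only [jumpOn, mul_ite, mul_zero, sum_ite_mem, univ_inter]

theorem jumpOn_nonneg (hlam : 0 < lam) (hlamL : lam ≤ L) (t : ℕ) (v : V) :
    0 ≤ jumpOn p W lam L ω t v := by
  unfold jumpOn
  split_ifs
  exacts [jump_nonneg hlam hlamL t, le_rfl]

theorem jumpOn_le (hlam : 0 < lam) (hlamL : lam ≤ L)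
    (hlamp : ∀ u w : V, w ∈ W → u ≠ w → p u w ≤ 1 - lam) (t : ℕ) (v : V) :
    jumpOn p W lam L ω t v ≤ L / lam ^ 2 := by
  unfold jumpOn
  split_ifs with hv
  exacts [jump_le hlam hlamL (fun u => hlamp u v hv) t,
    div_nonneg (hlam.le.trans hlamL) (sq_nonneg lam)]

theorem xiSum_zero (hω : ω 0 ∉ W) : xiSum p W lam L ω 0 = W.card := by
  rw [xiSum_eq_sum_xiTerm, sum_congr rfl fun w hw => xiTerm_zero fun h : ω 0 = w => hω (h ▸ hw)]
  simp

theorem abs_xiSum_sub_card_le (hlam : 0 < lam) (hlamL : lam ≤ L) (s : ℕ) :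
    |xiSum p W lam L ω s - W.card| ≤ W.card * (L / lam) := by
  have hnonneg : 0 ≤ xiSum p W lam L ω s := sum_nonneg fun w _ => xiTerm_nonneg hlam hlamL s
  have hle : xiSum p W lam L ω s ≤ W.card * (L / lam) := by
    rw [xiSum_eq_sum_xiTerm, ← nsmul_eq_mul, ← sum_const]
    exact sum_le_sum fun w _ => xiTerm_le hlam hlamL s
  have hcard : (W.card : ℝ) ≤ W.card * (L / lam) :=
    le_mul_of_one_le_right (Nat.cast_nonneg _) ((one_le_div hlam).2 hlamL)
  rw [abs_sub_le_iff]
  constructor <;> linarith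

theorem xiSum_succ [Fintype V] (hlam : 0 < lam) (hlamL : lam ≤ L) (t : ℕ) :
    xiSum p W lam L ω (t + 1) = xiSum p W lam L ω t +
      (∑ v, p (ω t) v * jumpOn p W lam L ω t v - jumpOn p W lam L ω t (ω (t + 1))) := by
  rw [sum_mul_jumpOn]
  simp only [xiSum_eq_sum_xiTerm, xiTerm_succ hlam hlamL t, sum_add_distrib, sub_mul,
    sum_sub_distrib, ite_mul, one_mul, zero_mul, sum_ite_eq, jumpOn]

theorem sum_budget_succ_le [Fintype V] (hlam : 0 < lam) (hlamL : lam ≤ L) (t : ℕ) :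
    ∑ w ∈ W, budget p lam L ω w (t + 1) ≤
      ∑ w ∈ W, budget p lam L ω w t - ∑ v, p (ω t) v * jumpOn p W lam L ω t v := by
  rw [sum_mul_jumpOn, ← sum_sub_distrib]
  exact sum_le_sum fun w _ => budget_succ_le hlam hlamL t

noncomputable def xiExpProcess (p : V → V → ℝ) (W : Finset V) (lam L θ : ℝ) (t : ℕ)
    (ω : ℕ → V) : ℝ :=
  Real.exp (θ * (xiSum p W lam L ω t - W.card) +
    θ ^ 2 * (L / lam ^ 2) * ∑ w ∈ W, budget p lam L ω w t)

theorem xiExpProcess_congr (θ : ℝ) {ω' : ℕ → V} {t : ℕ} (h : ∀ i ≤ t, ω i = ω' i) :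
    xiExpProcess p W lam L θ t ω = xiExpProcess p W lam L θ t ω' := by
  simp only [xiExpProcess, xiSum_eq_sum_xiTerm, xiTerm_congr h, budget_congr h]

theorem sum_mul_xiExpProcess_succ_le [Fintype V] (hp0 : ∀ u v, 0 ≤ p u v)
    (hrow : ∀ u, ∑ v, p u v = 1) (hlam : 0 < lam) (hlamL : lam ≤ L)
    (hlamp : ∀ u w : V, w ∈ W → u ≠ w → p u w ≤ 1 - lam) {θ : ℝ}
    (hθ : |θ| * (L / lam ^ 2) ≤ 1) (t : ℕ) (ω : ℕ → V) :
    ∑ v, p (ω t) v * xiExpProcess p W lam L θ (t + 1) (Function.update ω (t + 1) v) ≤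
      xiExpProcess p W lam L θ t ω := by
  set B := jumpOn p W lam L ω t
  set A := ∑ v, p (ω t) v * B v
  set R := ∑ w ∈ W, budget p lam L ω w t with hRdef
  have hc : 0 ≤ θ ^ 2 * (L / lam ^ 2) :=
    mul_nonneg (sq_nonneg θ) (div_nonneg (hlam.le.trans hlamL) (sq_nonneg lam))
  have hagree (v : V) : ∀ i ≤ t, Function.update ω (t + 1) v i = ω i :=
    fun i hi => Function.update_of_ne (by omega) _ _
  have hξ (v : V) : xiSum p W lam L (Function.update ω (t + 1) v) (t + 1) =
      xiSum p W lam L ω t + (A - B v) := by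
    rw [xiSum_succ W hlam hlamL, Function.update_self, Function.update_of_ne (by omega),
      xiSum_eq_sum_xiTerm, xiSum_eq_sum_xiTerm, sum_congr rfl fun w _ => xiTerm_congr (hagree v)]
    simp only [B, A, jumpOn, jump_congr (hagree v)]
  have hR (v : V) : ∑ w ∈ W, budget p lam L (Function.update ω (t + 1) v) w (t + 1) ≤ R - A := by
    refine (sum_budget_succ_le W hlam hlamL t).trans_eq ?_
    simp only [Function.update_of_ne (by omega : t ≠ t + 1), R, A, B, jumpOn,
      budget_congr (hagree v), jump_congr (hagree v)]
  have hstep (v : V) : xiExpProcess p W lam L θ (t + 1) (Function.update ω (t + 1) v) ≤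
      Real.exp (θ * (xiSum p W lam L ω t - W.card) + θ ^ 2 * (L / lam ^ 2) * (R - A)) *
        Real.exp (θ * (A - B v)) := by
    rw [xiExpProcess, hξ, ← Real.exp_add]
    refine Real.exp_le_exp.2 ?_
    nlinarith [mul_le_mul_of_nonneg_left (hR v) hc]
  calc ∑ v, p (ω t) v * xiExpProcess p W lam L θ (t + 1) (Function.update ω (t + 1) v)
      ≤ ∑ v, p (ω t) v * (Real.exp (θ * (xiSum p W lam L ω t - W.card) +
          θ ^ 2 * (L / lam ^ 2) * (R - A)) * Real.exp (θ * (A - B v))) :=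
        sum_le_sum fun v _ => mul_le_mul_of_nonneg_left (hstep v) (hp0 _ _)
    _ = Real.exp (θ * (xiSum p W lam L ω t - W.card) + θ ^ 2 * (L / lam ^ 2) * (R - A)) *
          ∑ v, p (ω t) v * Real.exp (θ * (A - B v)) := by
        rw [mul_sum]
        exact sum_congr rfl fun v _ => by ring
    _ ≤ Real.exp (θ * (xiSum p W lam L ω t - W.card) + θ ^ 2 * (L / lam ^ 2) * (R - A)) *
          Real.exp (θ ^ 2 * (L / lam ^ 2) * A) :=
        mul_le_mul_of_nonneg_left (Real.sum_mul_exp_mul_sub_le (hp0 _) (hrow _)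
          (jumpOn_nonneg W hlam hlamL t) (jumpOn_le W hlam hlamL hlamp t) hθ) (Real.exp_nonneg _)
    _ = xiExpProcess p W lam L θ t ω := by
        rw [← Real.exp_add, xiExpProcess, ← hRdef]
        ring_nf

theorem sum_pathProb_mul_exp_xiSum_le [Fintype V] (hp0 : ∀ u v, 0 ≤ p u v)
    (hrow : ∀ u, ∑ v, p u v = 1) (hlam : 0 < lam) (hlamL : lam ≤ L)
    (hlamp : ∀ u w : V, w ∈ W → u ≠ w → p u w ≤ 1 - lam) {v₀ : V} (hv₀ : v₀ ∉ W) {θ : ℝ}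
    (hθ : |θ| * (L / lam ^ 2) ≤ 1) (s : ℕ) :
    ∑ x : Fin (s + 1) → V, pathProb p v₀ x *
        Real.exp (θ * (xiSum p W lam L (extendPath x) s - W.card)) ≤
      Real.exp (θ ^ 2 * W.card * L ^ 2 / lam ^ 3) := by
  have hc : 0 ≤ θ ^ 2 * (L / lam ^ 2) :=
    mul_nonneg (sq_nonneg θ) (div_nonneg (hlam.le.trans hlamL) (sq_nonneg lam))
  have hbudget (ω : ℕ → V) (t : ℕ) : 0 ≤ ∑ w ∈ W, budget p lam L ω w t :=
    sum_nonneg fun w _ => budget_nonneg hlam hlamL t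
  have hexp_le (x : Fin (s + 1) → V) :
      Real.exp (θ * (xiSum p W lam L (extendPath x) s - W.card)) ≤
        xiExpProcess p W lam L θ s (extendPath x) :=
    Real.exp_le_exp.2 (le_add_of_nonneg_right (mul_nonneg hc (hbudget _ s)))
  have hsuper := sum_pathProb_mul_le_of_supermartingale hp0 (xiExpProcess p W lam L θ)
    (fun t _ _ h => xiExpProcess_congr W θ h)
    (sum_mul_xiExpProcess_succ_le W hp0 hrow hlam hlamL hlamp hθ) v₀ s
  have hbudget₀ : ∑ w ∈ W, budget p lam L (fun _ => v₀) w 0 ≤ W.card * (L / lam) := by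
    rw [← nsmul_eq_mul, ← sum_const]
    exact sum_le_sum fun w _ => budget_le hlam hlamL 0
  calc ∑ x : Fin (s + 1) → V, pathProb p v₀ x *
        Real.exp (θ * (xiSum p W lam L (extendPath x) s - W.card))
      ≤ ∑ x : Fin (s + 1) → V, pathProb p v₀ x * xiExpProcess p W lam L θ s (extendPath x) :=
        sum_le_sum fun x _ => mul_le_mul_of_nonneg_left (hexp_le x) (pathProb_nonneg hp0 v₀ x)
    _ ≤ xiExpProcess p W lam L θ 0 fun _ => v₀ := hsuper
    _ ≤ Real.exp (θ ^ 2 * (L / lam ^ 2) * (W.card * (L / lam))) := by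
        rw [xiExpProcess, xiSum_zero W hv₀, sub_self, mul_zero, zero_add]
        exact Real.exp_le_exp.2 (mul_le_mul_of_nonneg_left hbudget₀ hc)
    _ = Real.exp (θ ^ 2 * W.card * L ^ 2 / lam ^ 3) := by
        congr 1
        field_simp

theorem sum_pathProb_ite_lt_abs_xiSum_sub_le [Fintype V] (hp0 : ∀ u v, 0 ≤ p u v)
    (hrow : ∀ u, ∑ v, p u v = 1) (hlam : 0 < lam) (hlamL : lam ≤ L)
    (hlamp : ∀ u w : V, w ∈ W → u ≠ w → p u w ≤ 1 - lam) {v₀ : V} (hv₀ : v₀ ∉ W) {θ : ℝ}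
    (hθ0 : 0 ≤ θ) (hθ : θ * (L / lam ^ 2) ≤ 1) (ε : ℝ) (s : ℕ) :
    ∑ x : Fin (s + 1) → V,
        (if ε < |xiSum p W lam L (extendPath x) s - W.card| then pathProb p v₀ x else 0) ≤
      2 * Real.exp (-(θ * ε) + θ ^ 2 * W.card * L ^ 2 / lam ^ 3) := by
  have hθ' : |θ| * (L / lam ^ 2) ≤ 1 := by rwa [abs_of_nonneg hθ0]
  calc ∑ x : Fin (s + 1) → V,
        (if ε < |xiSum p W lam L (extendPath x) s - W.card| then pathProb p v₀ x else 0)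
      ≤ Real.exp (-(θ * ε)) *
          (∑ x, pathProb p v₀ x * Real.exp (θ * (xiSum p W lam L (extendPath x) s - W.card)) +
            ∑ x, pathProb p v₀ x * Real.exp (-θ * (xiSum p W lam L (extendPath x) s - W.card))) :=
        sum_ite_lt_abs_sub_le _ (fun x _ => pathProb_nonneg hp0 v₀ x) _ _ hθ0
    _ ≤ Real.exp (-(θ * ε)) * (Real.exp (θ ^ 2 * W.card * L ^ 2 / lam ^ 3) +
          Real.exp ((-θ) ^ 2 * W.card * L ^ 2 / lam ^ 3)) := by
        gcongr
        · exact sum_pathProb_mul_exp_xiSum_le W hp0 hrow hlam hlamL hlamp hv₀ hθ' s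
        · exact sum_pathProb_mul_exp_xiSum_le W hp0 hrow hlam hlamL hlamp hv₀ (by rwa [abs_neg]) s
    _ = 2 * Real.exp (-(θ * ε) + θ ^ 2 * W.card * L ^ 2 / lam ^ 3) := by
        rw [neg_sq, Real.exp_add]
        ring

theorem sum_pathProb_ite_lt_abs_xiSum_sub_le_of_le [Fintype V] (hp0 : ∀ u v, 0 ≤ p u v)
    (hrow : ∀ u, ∑ v, p u v = 1) (hlam : 0 < lam) (hlamL : lam ≤ L)
    (hlamp : ∀ u w : V, w ∈ W → u ≠ w → p u w ≤ 1 - lam) {v₀ : V} (hv₀ : v₀ ∉ W) {ϑ : ℝ}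
    (hϑ0 : 0 ≤ ϑ) (hϑ : ϑ ≤ L / lam) (s : ℕ) :
    ∑ x : Fin (s + 1) → V,
        (if ϑ * W.card < |xiSum p W lam L (extendPath x) s - W.card| then pathProb p v₀ x
          else 0) ≤
      2 * Real.exp (-(ϑ ^ 2 * lam ^ 3 * W.card / (4 * L ^ 2))) := by
  have hL : 0 < L := hlam.trans_le hlamL
  set θ := ϑ * lam ^ 3 / (2 * L ^ 2) with hθdef
  have hθ : θ * (L / lam ^ 2) ≤ 1 := by
    rw [show θ * (L / lam ^ 2) = ϑ * lam / (2 * L) by rw [hθdef]; field_simp,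
      div_le_one (by positivity)]
    linarith [(le_div_iff₀ hlam).1 hϑ]
  refine (sum_pathProb_ite_lt_abs_xiSum_sub_le W hp0 hrow hlam hlamL hlamp hv₀ (by positivity) hθ
    _ s).trans_eq ?_
  rw [hθdef]
  field_simp
  ring_nf

end Sum

open scoped Classical in
/-- Concentration of `ξ_s`: for a Markov chain started at `v₀ ∉ W`,
`Pr(|ξ_s - m| > ϑm) ≤ 2 exp(-ϑ²λ⁴m/(8L)²)`. -/
theorem xiSum_concentration {V : Type*} [Fintype V]
    (p : V → V → ℝ) (hp0 : ∀ u x : V, 0 ≤ p u x)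
    (hrow : ∀ u : V, ∑ x : V, p u x = 1)
    (W : Finset V) (m : ℕ) (hm : W.card = m)
    (lam L : ℝ) (hlam0 : 0 < lam) (hlam1 : lam ≤ 1) (hL : 1 ≤ L)
    (hlamp : ∀ u w : V, w ∈ W → u ≠ w → p u w ≤ 1 - lam)
    (v₀ : V) (hv₀ : v₀ ∉ W) (ϑ : ℝ) (hϑ : 0 < ϑ) (s : ℕ) :
    (∑ x : Fin (s + 1) → V,
        if x 0 = v₀ ∧
            ϑ * m < |xiSum p W lam L (fun t => x ⟨min t s, by omega⟩) s - m| then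
          ∏ i : Fin s, p (x i.castSucc) (x i.succ)
        else 0)
      ≤ 2 * Real.exp (-(ϑ ^ 2 * lam ^ 4 * m) / (8 * L) ^ 2) := by
  subst hm
  have hlamL : lam ≤ L := hlam1.trans hL
  set ξ : (Fin (s + 1) → V) → ℝ := fun x => xiSum p W lam L (extendPath x) s
  calc (∑ x : Fin (s + 1) → V, if x 0 = v₀ ∧ ϑ * W.card < |ξ x - W.card| then
          ∏ i : Fin s, p (x i.castSucc) (x i.succ) else 0)
      = ∑ x, if ϑ * W.card < |ξ x - W.card| then pathProb p v₀ x else 0 :=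
        sum_congr rfl fun x _ => by by_cases h : x 0 = v₀ <;> simp [pathProb, h]
    _ ≤ 2 * Real.exp (-(ϑ ^ 2 * lam ^ 4 * W.card) / (8 * L) ^ 2) := ?_
  rcases le_or_gt ϑ (L / lam) with hϑL | hϑL
  · refine (sum_pathProb_ite_lt_abs_xiSum_sub_le_of_le W hp0 hrow hlam0 hlamL hlamp hv₀ hϑ.le hϑL
      s).trans ?_
    have hlam43 : lam ^ 4 ≤ lam ^ 3 := pow_le_pow_of_le_one hlam0.le hlam1 (by norm_num)
    have hK : 0 ≤ ϑ ^ 2 * W.card * L ^ 2 := by positivity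
    gcongr
    rw [neg_div, neg_le_neg_iff, div_le_div_iff₀ (by positivity) (by positivity)]
    nlinarith [mul_le_mul_of_nonneg_left hlam43 hK, mul_nonneg hK (pow_nonneg hlam0.le 3)]
  · refine (sum_eq_zero fun x _ => if_neg (not_lt.2 ?_)).trans_le (by positivity)
    refine (abs_xiSum_sub_card_le W hlam0 hlamL s).trans ?_
    rw [mul_comm ϑ]
    exact mul_le_mul_of_nonneg_left hϑL.le (Nat.cast_nonneg _)
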